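/- arXiv:0804.0936 — 2 statements merged into one kernel-verified Lean document; each statement's English description precedes it below -/
import Mathlib

section
/- In the Frederickson–Johnson algorithm the number of active cells at the start of iteration p is O(2^p): concretely, if each iteration splits cells into 4 and then retains at most ⌈k·4^p/n²⌉ + L_p − (⌈k·4^p/n²⌉ − L_p) + 1 = 2·L_p + 1 cells where L_p = min(n, 2^{p+1} − 1), then |𝒞_{p+1}| ≤ 2·L_p + 1 ≤ 2^{p+3}. -/
/-- The number of active cells in iteration `p` of the FJ-algorithm is
`O(2^p)`: with `L_p = min n (2^(p+1) - 1)`, `m = ⌈k·4^p/n²⌉`, `q = m + L_p`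
and `r = m - L_p` (truncated subtraction, so `r = max(m - L_p, 0)`), if
`|𝒞_{p+1}| ≤ q - r` then `|𝒞_{p+1}| ≤ 2·L_p + 1 ≤ 2^(p+3)`. -/
theorem active_cells_bound (n k p c : ℕ) (hn : 1 ≤ n)
    (L : ℕ) (hL : L = min n (2 ^ (p + 1) - 1))
    (m : ℕ) (hm : m = (k * 4 ^ p + n ^ 2 - 1) / n ^ 2)
    (q : ℕ) (hq : q = m + L)
    (r : ℕ) (hr : r = m - L)
    (hc : c ≤ q - r) :
    c ≤ 2 * L + 1 ∧ 2 * L + 1 ≤ 2 ^ (p + 3) := by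
  have h1 : L ≤ 2 ^ (p + 1) - 1 := by omega
  have h2 : (1:ℕ) ≤ 2 ^ (p + 1) := Nat.one_le_two_pow
  have h3 : 2 ^ (p + 3) = 4 * 2 ^ (p + 1) := by ring
  omega
end

section
/- In the partial bit-reversal procedure PBR applied to an array of length n = 2^t, each element originally at even index j = (2ℓ-1)·2^k > 0 is moved exactly k+1 times (once in each of the first k recursive levels, then once more), after which it remains fixed at position n/2^{k+1} + ℓ − 1 for all subsequent recursive calls. -/
/-! While the active segment has length `m * 2^d` and the element sits at the even position
`c * 2^d` with `c < m`, each round just halves both, so after `d` rounds it is at `c`. For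
`j = (2ℓ - 1) 2^k` the next round finds it at the odd position `2(ℓ - 1) + 1` of a segment of
length `m` and sends it to `m/2 + ℓ - 1`, which is beyond every later, shorter, active segment. -/

/-- One round of the stable even/odd partition on a segment of length `s`:
the element at position `i < s` moves to `i/2` if `i` is even and to
`s/2 + (i-1)/2` if `i` is odd; positions `≥ s` are untouched. -/
def pbrStep (s i : ℕ) : ℕ :=
  if i < s then (if i % 2 = 0 then i / 2 else s / 2 + (i - 1) / 2) else i

/-- Position of the element originally at position `i` after `d` rounds of
PBR on an array of length `n` (each round halves the active segment). -/
def pbrPos : ℕ → ℕ → ℕ → ℕ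
  | _, 0, i => i
  | n, d + 1, i => pbrPos (n / 2) d (pbrStep n i)

lemma pbrStep_of_le {s i : ℕ} (h : s ≤ i) : pbrStep s i = i := by
  simp [pbrStep, Nat.not_lt.mpr h]

lemma pbrStep_two_mul {s a : ℕ} (h : 2 * a < s) : pbrStep s (2 * a) = a := by
  simp [pbrStep, h]

lemma pbrStep_two_mul_add_one {s a : ℕ} (h : 2 * a + 1 < s) :
    pbrStep s (2 * a + 1) = s / 2 + a := by
  simp [pbrStep, h, Nat.add_mod]

lemma pbrPos_of_le (d : ℕ) {m i : ℕ} (h : m ≤ i) : pbrPos m d i = i := by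
  induction d generalizing m with
  | zero => rfl
  | succ d ih =>
    rw [pbrPos, pbrStep_of_le h]
    exact ih ((Nat.div_le_self m 2).trans h)

lemma pbrPos_add (d e n i : ℕ) :
    pbrPos n (d + e) i = pbrPos (n / 2 ^ d) e (pbrPos n d i) := by
  induction d generalizing n i with
  | zero => simp [pbrPos]
  | succ d ih =>
    rw [Nat.add_right_comm, pbrPos, pbrPos, ih, Nat.div_div_eq_div_mul, pow_succ']

lemma pbrPos_mul_pow (d : ℕ) {m c : ℕ} (h : c < m) : pbrPos (m * 2 ^ d) d (c * 2 ^ d) = c := by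
  induction d generalizing m c with
  | zero => simp [pbrPos]
  | succ d ih =>
    have hlt : 2 * (c * 2 ^ d) < 2 * (m * 2 ^ d) := by
      have := Nat.mul_lt_mul_of_pos_right h (Nat.two_pow_pos d)
      omega
    rw [pow_succ', Nat.mul_left_comm c, Nat.mul_left_comm m, pbrPos, pbrStep_two_mul hlt,
      Nat.mul_div_cancel_left _ two_pos, ih h]

lemma pbrPos_eq_div_pow (d : ℕ) {n i : ℕ} (hi : 2 ^ d ∣ i) (hn : 2 ^ d ∣ n) (h : i < n) :
    pbrPos n d i = i / 2 ^ d := by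
  obtain ⟨c, rfl⟩ := hi
  obtain ⟨m, rfl⟩ := hn
  rw [mul_comm _ c, mul_comm _ m, pbrPos_mul_pow d (Nat.lt_of_mul_lt_mul_left h),
    Nat.mul_div_cancel _ (Nat.two_pow_pos d)]

lemma pbrPos_odd_mul_pow (k e : ℕ) {m a : ℕ} (h : 2 * a + 1 < m) :
    pbrPos (m * 2 ^ k) (k + (e + 1)) ((2 * a + 1) * 2 ^ k) = m / 2 + a := by
  rw [pbrPos_add, pbrPos_mul_pow k h, Nat.mul_div_cancel _ (Nat.two_pow_pos k), pbrPos,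
    pbrStep_two_mul_add_one h]
  exact pbrPos_of_le e (Nat.le_add_right _ _)

theorem pbr_movement_general (t n : ℕ) (hn : n = 2 ^ t)
    (k ℓ j : ℕ) (hℓ : 1 ≤ ℓ)
    (hj : j = (2 * ℓ - 1) * 2 ^ k) (hjn : j < n) :
    (∀ d : ℕ, d ≤ k → pbrPos n d j = j / 2 ^ d) ∧
    (∀ d : ℕ, k + 1 ≤ d → pbrPos n d j = n / 2 ^ (k + 1) + ℓ - 1) := by
  have hkt : k < t := by
    have : 2 ^ k < 2 ^ t := lt_of_le_of_lt (hj ▸ Nat.le_mul_of_pos_left _ (by omega)) (hn ▸ hjn)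
    exact (Nat.pow_lt_pow_iff_right (by norm_num)).mp this
  have hn' : n = 2 ^ (t - k) * 2 ^ k := by rw [hn, ← pow_add, Nat.sub_add_cancel hkt.le]
  refine ⟨fun d hd => ?_, fun d hd => ?_⟩
  · exact pbrPos_eq_div_pow d (hj ▸ Dvd.dvd.mul_left (pow_dvd_pow 2 hd) _)
      (hn ▸ pow_dvd_pow 2 (by omega)) hjn
  · obtain ⟨e, rfl⟩ : ∃ e, d = k + (e + 1) := ⟨d - (k + 1), by omega⟩
    have hodd : 2 * ℓ - 1 = 2 * (ℓ - 1) + 1 := by omega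
    have hlt : 2 * (ℓ - 1) + 1 < 2 ^ (t - k) :=
      hodd ▸ Nat.lt_of_mul_lt_mul_right (hj ▸ hn' ▸ hjn)
    rw [hj, hodd, hn', pbrPos_odd_mul_pow k e hlt, pow_succ, mul_comm (2 ^ k),
      Nat.mul_div_mul_right _ _ (Nat.two_pow_pos k)]
    omega

/-- In PBR on an array of length `n = 2^t`, the element originally at
position `j = (2ℓ-1)·2^k` (with `k, ℓ ≥ 1`, `j < n`) is at position `j/2^d`
after `d ≤ k` rounds (so it is moved in each of the first `k` rounds), is
moved once more in round `k+1`, and thereafter remains fixed at position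
`n/2^(k+1) + ℓ - 1`. -/
theorem pbr_movement (t n : ℕ) (ht : 1 ≤ t) (hn : n = 2 ^ t)
    (k ℓ j : ℕ) (hk : 1 ≤ k) (hℓ : 1 ≤ ℓ)
    (hj : j = (2 * ℓ - 1) * 2 ^ k) (hjn : j < n) :
    (∀ d : ℕ, d ≤ k → pbrPos n d j = j / 2 ^ d) ∧
    (∀ d : ℕ, k + 1 ≤ d → pbrPos n d j = n / 2 ^ (k + 1) + ℓ - 1) :=
  pbr_movement_general t n hn k ℓ j hℓ hj hjn
end
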